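/- The sets of permutations S_n(1-32, 23-1) and S_n(1-32, 2-31) are equal for every n. -/
import Mathlib


def contains132 {n : ℕ} (π : Equiv.Perm (Fin n)) : Prop :=
  ∃ i j : ℕ, ∃ (_ : i < j) (hj : j + 1 < n),
    π ⟨i, by omega⟩ < π ⟨j + 1, hj⟩ ∧ π ⟨j + 1, hj⟩ < π ⟨j, by omega⟩

def contains23_1 {n : ℕ} (π : Equiv.Perm (Fin n)) : Prop :=
  ∃ i j : ℕ, ∃ (_ : i + 1 < j) (hj : j < n),
    π ⟨j, hj⟩ < π ⟨i, by omega⟩ ∧ π ⟨i, by omega⟩ < π ⟨i + 1, by omega⟩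

def contains231 {n : ℕ} (π : Equiv.Perm (Fin n)) : Prop :=
  ∃ i j : ℕ, ∃ (_ : i < j) (hj : j + 1 < n),
    π ⟨j + 1, hj⟩ < π ⟨i, by omega⟩ ∧ π ⟨i, by omega⟩ < π ⟨j, by omega⟩

private lemma permCast {n : ℕ} (π : Equiv.Perm (Fin n)) {a b : ℕ} (ha : a < n) (hb : b < n)
    (h : a = b) : π ⟨a, ha⟩ = π ⟨b, hb⟩ := by subst h; rfl

private lemma permNe {n : ℕ} (π : Equiv.Perm (Fin n)) {a b : ℕ} (ha : a < n) (hb : b < n)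
    (h : a ≠ b) : π ⟨a, ha⟩ ≠ π ⟨b, hb⟩ := by
  intro he
  exact h (Fin.mk.injEq .. ▸ (π.injective he))

private lemma auxA {n : ℕ} (π : Equiv.Perm (Fin n)) :
    ∀ k i : ℕ, ∀ (hk : i + 1 + k < n),
      π ⟨i + 1 + k, hk⟩ < π ⟨i, by omega⟩ → π ⟨i, by omega⟩ < π ⟨i + 1, by omega⟩ →
      contains231 π := by
  intro k
  induction k with
  | zero => intro i hk h1 h2; exact absurd (h1.trans h2) (lt_irrefl _)
  | succ k ih =>
    intro i hk h1 h2
    have hcmp := lt_trichotomy (π ⟨i, (by omega : i < n)⟩) (π ⟨i + 1 + k, (by omega : i + 1 + k < n)⟩)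
    rcases hcmp with h | h | h
    · exact ⟨i, i + 1 + k, by omega, by omega, h1, h⟩
    · exact absurd h.symm (permNe π (by omega) (by omega) (by omega : i + 1 + k ≠ i))
    · exact ih i (by omega) h h2

private lemma auxB {n : ℕ} (π : Equiv.Perm (Fin n)) (hav : ¬ contains132 π) :
    ∀ k i : ℕ, ∀ (hk : i + k + 2 < n),
      π ⟨i + k + 2, hk⟩ < π ⟨i, by omega⟩ → π ⟨i, by omega⟩ < π ⟨i + k + 1, by omega⟩ →
      contains23_1 π := by
  intro k
  induction k with
  | zero =>
    intro i hk h1 h2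
    exact ⟨i, i + 2, by omega, by omega, h1, h2⟩
  | succ k ih =>
    intro i hk h1 h2
    have hcmp := lt_trichotomy (π ⟨i, (by omega : i < n)⟩) (π ⟨i + 1, (by omega : i + 1 < n)⟩)
    rcases hcmp with h | h | h
    · exact ⟨i, i + k + 3, by omega, by omega, h1, h⟩
    · exact absurd h (permNe π (by omega) (by omega) (by omega : i ≠ i + 1))
    · have hcmp2 := lt_trichotomy (π ⟨i + 1, (by omega : i + 1 < n)⟩)
        (π ⟨i + k + 3, (by omega : i + k + 3 < n)⟩)
      rcases hcmp2 with h' | h' | h'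
      · exact absurd ⟨i + 1, i + k + 2, by omega, by omega, h', h1.trans h2⟩ hav
      · exact absurd h' (permNe π (by omega) (by omega) (by omega : i + 1 ≠ i + k + 3))
      · have e1 := permCast π (show i + 1 + k + 2 < n by omega) (show i + k + 3 < n by omega)
          (show i + 1 + k + 2 = i + k + 3 by omega)
        have e2 := permCast π (show i + 1 + k + 1 < n by omega) (show i + k + 2 < n by omega)
          (show i + 1 + k + 1 = i + k + 2 by omega)
        exact ih (i + 1) (by omega) (lt_of_eq_of_lt e1 h') (lt_of_lt_of_eq (h.trans h2) e2.symm)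

theorem stmt18 (n : ℕ) (π : Equiv.Perm (Fin n)) :
    (¬ contains132 π ∧ ¬ contains23_1 π) ↔ (¬ contains132 π ∧ ¬ contains231 π) := by
  constructor
  · rintro ⟨h132, h231⟩
    refine ⟨h132, fun hc => h231 ?_⟩
    obtain ⟨i, j, hij, hj, h1, h2⟩ := hc
    have hk : i + (j - i - 1) + 2 < n := by omega
    have e1 := permCast π hk hj (show i + (j - i - 1) + 2 = j + 1 by omega)
    have e2 := permCast π (show i + (j - i - 1) + 1 < n by omega) (show j < n by omega)
      (show i + (j - i - 1) + 1 = j by omega)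
    exact auxB π h132 (j - i - 1) i hk (lt_of_eq_of_lt e1 h1) (lt_of_lt_of_eq h2 e2.symm)
  · rintro ⟨h132, h231⟩
    refine ⟨h132, fun hc => h231 ?_⟩
    obtain ⟨i, j, hij, hj, h1, h2⟩ := hc
    have hk : i + 1 + (j - i - 1) < n := by omega
    have e1 := permCast π hk (show j < n by omega) (show i + 1 + (j - i - 1) = j by omega)
    exact auxA π (j - i - 1) i hk (lt_of_eq_of_lt e1 h1) h2
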